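/- (Reverse Strategy Preservation) Let G be a MAGIIAN and G^K its MKBSC expansion (with no PDK assumption). Let R be an observable reachability objective in G and R^K its translation for G^K. If there is a winning profile of observation-based perfect-recall strategies in G^K for R^K, then there is also a winning profile of observation-based perfect-recall strategies in G for R. -/
import Mathlib


open Set

/-- A multi-agent game with imperfect information against Nature (MAGIIAN).
`obs i l` is the observation block of agent `i` containing location `l`;
the axioms make the blocks of each agent a partition of the locations. -/
structure MAGIIAN (Agt Loc : Type) (Act : Agt → Type) where
  init : Loc
  trans : Loc → (∀ i, Act i) → Loc → Prop
  obs : Agt → Loc → Set Loc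
  obs_mem : ∀ i l, l ∈ obs i l
  obs_eq : ∀ i l l', l' ∈ obs i l → obs i l' = obs i l

namespace MAGIIAN

variable {Agt Loc : Type} {Act : Agt → Type}

/-- `o` is an observation (block) of agent `i` in `G`. -/
def IsObs (G : MAGIIAN Agt Loc Act) (i : Agt) (o : Set Loc) : Prop :=
  ∃ l, o = G.obs i l

/-- Transition relation `Δ_i` of the projection `G|_i`. -/
def projTrans (G : MAGIIAN Agt Loc Act) (i : Agt) (l : Loc) (a : Act i) (l' : Loc) : Prop :=
  ∃ σ : ∀ j, Act j, σ i = a ∧ G.trans l σ l'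

/-- Transition relation `Δ^K_i` of the individual KBSC expansion `(G|_i)^K`. -/
def kTrans (G : MAGIIAN Agt Loc Act) (i : Agt) (s : Set Loc) (a : Act i) (s' : Set Loc) : Prop :=
  ∃ o : Set Loc, G.IsObs i o ∧ s' = {l' ∈ o | ∃ l ∈ s, G.projTrans i l a l'} ∧ s'.Nonempty

/-- Pruned joint transition relation `Δ^K` of the MKBSC expansion `G^K`
(unrealisable transitions are removed). -/
def kTransJ (G : MAGIIAN Agt Loc Act) (s : Agt → Set Loc) (σ : ∀ i, Act i)
    (s' : Agt → Set Loc) : Prop :=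
  (∀ i, G.kTrans i (s i) (σ i) (s' i)) ∧
    ∃ l ∈ (⋂ i, s i), ∃ l' ∈ (⋂ i, s' i), G.trans l σ l'

/-- The MKBSC expansion `G^K`, as a MAGIIAN over joint knowledge states;
agent `i`'s observation of a joint knowledge state is determined by its `i`-th component. -/
def expand (G : MAGIIAN Agt Loc Act) : MAGIIAN Agt (Agt → Set Loc) Act where
  init := fun _ => {G.init}
  trans := G.kTransJ
  obs := fun i s => {s' | s' i = s i}
  obs_mem := fun _ _ => rfl
  obs_eq := by
    intro i s s' h
    simp only [Set.mem_setOf_eq] at h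
    ext t
    simp [Set.mem_setOf_eq, h]

/-- Reachability from the initial location. -/
def Reachable (G : MAGIIAN Agt Loc Act) (l : Loc) : Prop :=
  Relation.ReflTransGen (fun x y => ∃ σ, G.trans x σ y) G.init l

/-- The MKBSC expansion `G^K` fulfills the perfect-distributed-knowledge (PDK) condition:
every reachable joint knowledge state has singleton component intersection. -/
def PDK (G : MAGIIAN Agt Loc Act) : Prop :=
  ∀ s : Agt → Set Loc, G.expand.Reachable s → ∃ l : Loc, (⋂ i, s i) = {l}

/-- A full play, given as its sequences of locations and of joint actions. -/
def IsPlay (G : MAGIIAN Agt Loc Act) (l : ℕ → Loc) (σ : ℕ → ∀ i, Act i) : Prop :=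
  l 0 = G.init ∧ ∀ k, G.trans (l k) (σ k) (l (k + 1))

/-- Observation history of agent `i` (list of observation blocks) up to time `k`. -/
def obsHist (G : MAGIIAN Agt Loc Act) (i : Agt) (l : ℕ → Loc) (k : ℕ) : List (Set Loc) :=
  (List.range (k + 1)).map fun j => G.obs i (l j)

/-- Outcomes (location sequences) of a profile of observation-based
perfect-recall strategies. -/
def PROutcome (G : MAGIIAN Agt Loc Act) (α : ∀ i, List (Set Loc) → Act i)
    (l : ℕ → Loc) : Prop :=
  ∃ σ : ℕ → ∀ i, Act i, G.IsPlay l σ ∧ ∀ k i, σ k i = α i (G.obsHist i l k)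

/-- Outcomes of a profile of observation-based memoryless strategies. -/
def MLOutcome (G : MAGIIAN Agt Loc Act) (α : ∀ i, Set Loc → Act i) (l : ℕ → Loc) : Prop :=
  ∃ σ : ℕ → ∀ i, Act i, G.IsPlay l σ ∧ ∀ k i, σ k i = α i (G.obs i (l k))

/-- A play is winning for an observable reachability objective `R` iff some
agent at some point observes an observation in `R`. -/
def WinsReach (G : MAGIIAN Agt Loc Act) (R : Set (Set Loc)) (l : ℕ → Loc) : Prop :=
  ∃ i k, G.obs i (l k) ∈ R

/-- A play is winning for an observable safety objective `F` iff at every point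
some agent observes an observation in `F`. -/
def WinsSafe (G : MAGIIAN Agt Loc Act) (F : Set (Set Loc)) (l : ℕ → Loc) : Prop :=
  ∀ k, ∃ i, G.obs i (l k) ∈ F

/-- `ob_i`: maps an observation block of `G^K` for agent `i` (all of whose members have the
same `i`-th component `A`) to the unique observation of `i` in `G` that includes `A`. -/
def obMap (G : MAGIIAN Agt Loc Act) (i : Agt) (O : Set (Agt → Set Loc)) : Set Loc :=
  ⋃ s ∈ O, ⋃ l ∈ s i, G.obs i l

/-- The translated objective `R^K = {s ∈ S : ∃ i, ∃ o ∈ R ∩ Obs_i, s i ⊆ o}`,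
as a set of joint knowledge states. -/
def transObj (G : MAGIIAN Agt Loc Act) (R : Set (Set Loc)) : Set (Agt → Set Loc) :=
  {s | ∃ i, ∃ o ∈ R, G.IsObs i o ∧ s i ⊆ o}

end MAGIIAN


namespace MAGIIAN

variable {Agt Loc : Type} {Act : Agt → Type}

/-- One knowledge update step of agent `i`. -/
def kstep (G : MAGIIAN Agt Loc Act) (i : Agt) (s : Set Loc) (a : Act i) (o : Set Loc) :
    Set Loc := {l' ∈ o | ∃ l ∈ s, G.projTrans i l a l'}

/-- Turn a (newest-first) list of knowledge states into the corresponding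
(oldest-first) list of observation blocks of `G^K` for agent `i`. -/
def blocksOf (i : Agt) (ss : List (Set Loc)) : List (Set (Agt → Set Loc)) :=
  ss.reverse.map fun A => {s' : Agt → Set Loc | s' i = A}

/-- Knowledge-state sequence (newest first) computed from a reversed observation
history (newest first), using `αK` to reconstruct agent `i`'s own actions. -/
def kstates (G : MAGIIAN Agt Loc Act) (αK : ∀ i, List (Set (Agt → Set Loc)) → Act i)
    (i : Agt) : List (Set Loc) → List (Set Loc)
  | [] => []
  | o :: t =>
    match kstates G αK i t with
    | [] => [{G.init}]
    | s :: ss => kstep G i s (αK i (blocksOf i (s :: ss))) o :: s :: ss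

/-- Knowledge-state sequence of agent `i` along a play. -/
def stateSeq (G : MAGIIAN Agt Loc Act) (i : Agt) (l : ℕ → Loc) (a : ℕ → Act i) : ℕ → Set Loc
  | 0 => {G.init}
  | k + 1 => kstep G i (stateSeq G i l a k) (a k) (G.obs i (l (k + 1)))

lemma kstates_eq_cons (G : MAGIIAN Agt Loc Act)
    (αK : ∀ i, List (Set (Agt → Set Loc)) → Act i) (i : Agt) (o : Set Loc)
    (t : List (Set Loc)) (s : Set Loc) (ss : List (Set Loc))
    (h : kstates G αK i t = s :: ss) :
    kstates G αK i (o :: t) = kstep G i s (αK i (blocksOf i (s :: ss))) o :: s :: ss := by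
  rw [kstates, h]

lemma obsHist_succ (G : MAGIIAN Agt Loc Act) (i : Agt) (l : ℕ → Loc) (k : ℕ) :
    G.obsHist i l (k + 1) = G.obsHist i l k ++ [G.obs i (l (k + 1))] := by
  simp [obsHist, List.range_succ]

lemma kstates_obsHist (G : MAGIIAN Agt Loc Act)
    (αK : ∀ i, List (Set (Agt → Set Loc)) → Act i) (i : Agt)
    (l : ℕ → Loc) (a : ℕ → Act i)
    (ha : ∀ k, a k = αK i (blocksOf i (kstates G αK i (G.obsHist i l k).reverse))) (k : ℕ) :
    kstates G αK i (G.obsHist i l k).reverse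
      = ((List.range (k + 1)).map (stateSeq G i l a)).reverse := by
  induction k with
  | zero =>
    simp only [obsHist, show List.range 1 = [0] from rfl, List.map_cons, List.map_nil, List.reverse_singleton]
    rfl
  | succ k ih =>
    have hrev : ((List.range (k + 1)).map (stateSeq G i l a)).reverse
        = stateSeq G i l a k :: ((List.range k).map (stateSeq G i l a)).reverse := by
      simp [List.range_succ]
    rw [obsHist_succ, List.reverse_append]
    simp only [List.reverse_singleton, List.singleton_append]
    rw [kstates_eq_cons G αK i _ _ _ _ (by rw [ih, hrev])]
    have hact : αK i (blocksOf i (stateSeq G i l a k ::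
        ((List.range k).map (stateSeq G i l a)).reverse)) = a k := by
      rw [← hrev, ← ih, ← ha k]
    rw [hact]
    simp [List.range_succ, stateSeq]

lemma mem_stateSeq (G : MAGIIAN Agt Loc Act) (i : Agt) (l : ℕ → Loc)
    (σ : ℕ → ∀ j, Act j) (hl : G.IsPlay l σ) (k : ℕ) :
    l k ∈ stateSeq G i l (fun n => σ n i) k := by
  induction k with
  | zero => simp [stateSeq, hl.1]
  | succ k ih =>
    exact ⟨G.obs_mem i _, l k, ih, σ k, rfl, hl.2 k⟩

/-- Reverse Strategy Preservation: if there is a winning profile of observation-based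
perfect-recall strategies in `G^K` for the translated observable reachability
objective `R^K`, then there is also one in `G` for `R` (no PDK assumption). -/
theorem reverse_strategy_preservation_reach (G : MAGIIAN Agt Loc Act)
    (R : Set (Set Loc)) (hR : ∀ o ∈ R, ∃ i, G.IsObs i o)
    (h : ∃ αK : ∀ i, List (Set (Agt → Set Loc)) → Act i,
      ∀ s : ℕ → Agt → Set Loc, G.expand.PROutcome αK s → ∃ k, s k ∈ G.transObj R) :
    ∃ α : ∀ i, List (Set Loc) → Act i, ∀ l, G.PROutcome α l → G.WinsReach R l := by
  obtain ⟨αK, hαK⟩ := h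
  refine ⟨fun i hist => αK i (blocksOf i (kstates G αK i hist.reverse)), ?_⟩
  rintro l ⟨σ, hplay, hcons⟩
  -- the joint knowledge-state sequence induced by the play
  set sK : ℕ → Agt → Set Loc := fun k i => stateSeq G i l (fun n => σ n i) k with hsK
  have hmem : ∀ k i, l k ∈ sK k i := fun k i => mem_stateSeq G i l σ hplay k
  have hks : ∀ i k, kstates G αK i (G.obsHist i l k).reverse
      = ((List.range (k + 1)).map (stateSeq G i l (fun n => σ n i))).reverse := by
    intro i
    exact kstates_obsHist G αK i l _ (fun k => hcons k i)
  -- agent i's G^K-observation history of sK equals what the strategy sees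
  have hobsK : ∀ i k, G.expand.obsHist i sK k
      = blocksOf i (kstates G αK i (G.obsHist i l k).reverse) := by
    intro i k
    rw [hks i k]
    simp only [blocksOf, List.reverse_reverse, List.map_map]
    rfl
  have hout : G.expand.PROutcome αK sK := by
    refine ⟨σ, ⟨?_, ?_⟩, ?_⟩
    · funext i; rfl
    · intro k
      refine ⟨fun i => ⟨G.obs i (l (k + 1)), ⟨l (k + 1), rfl⟩, rfl, ⟨l (k + 1), hmem (k + 1) i⟩⟩,
        l k, ?_, l (k + 1), ?_, hplay.2 k⟩
      · exact Set.mem_iInter.mpr fun i => hmem k i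
      · exact Set.mem_iInter.mpr fun i => hmem (k + 1) i
    · intro k i
      rw [hobsK i k]
      exact hcons k i
  obtain ⟨k, i, o, hoR, ⟨l'', ho⟩, hsub⟩ := hαK sK hout
  refine ⟨i, k, ?_⟩
  have hlk : l k ∈ G.obs i l'' := by rw [← ho]; exact hsub (hmem k i)
  rw [G.obs_eq i l'' (l k) hlk, ← ho]
  exact hoR

end MAGIIAN
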